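/- Let C be a braided finite tensor category with coend Hopf algebra F (multiplication m, comultiplication Δ). Then Hom_C(1,F) is a k-algebra under f⋆g = m∘(f⊗g), Hom_C(F,1) is a k-algebra under a⋆b = (a⊗b)∘Δ, and the map Φ_C : Hom_C(1,F) → Hom_C(F,1), χ ↦ ω∘(χ⊗id_F), is a homomorphism of k-algebras. -/

import Mathlib

open CategoryTheory Category MonoidalCategory Limits

attribute [local instance] CategoryTheory.Abelian.hasFiniteBiproducts

universe w v u w' v'

namespace NonSSMTC

variable (k : Type u) [Field k]

/-- A finite abelian category over `k`: a `k`-linear additive category that is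
`k`-linearly equivalent to the category of finite-dimensional modules over some
finite-dimensional `k`-algebra `A`. -/
def IsFiniteAbelian (C : Type v) [Category.{w} C] [Preadditive C] [Linear k C] : Prop :=
  ∃ A : AlgCat.{u} k, FiniteDimensional k A ∧
    ∃ G : C ⥤ ModuleCat.{u} A, G.Additive ∧ G.Full ∧ G.Faithful ∧
      (∀ (c : k) {X Y : C} (f : X ⟶ Y), G.map (c • f) = c • G.map f) ∧
      (∀ X : C, @FiniteDimensional k (RestrictScalars k A (G.obj X)) _ _ (RestrictScalars.module k A (G.obj X))) ∧
      (∀ M : ModuleCat.{u} A, @FiniteDimensional k (RestrictScalars k A M) _ _ (RestrictScalars.module k A M) →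
        ∃ X : C, Nonempty (G.obj X ≅ M))

variable {k}
variable (C : Type v) [Category.{w} C] [MonoidalCategory C]

section Plain

variable [HasZeroMorphisms C]

/-- `X` is a subquotient of `M`. -/
def IsSubquotient (X M : C) : Prop :=
  ∃ (W : C) (i : W ⟶ M) (p : W ⟶ X), Mono i ∧ Epi p

end Plain

section Coends

variable [RightRigidCategory C]

/-- The coend `F = ∫^{X ∈ C} X* ⊗ X` of the functor `(X, Y) ↦ X* ⊗ Y`, presented by
its universal property: a dinatural family `ι` which is initial among dinatural
families out of `X* ⊗ X`. -/
structure Coend where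
  F : C
  ι : ∀ X : C, Xᘁ ⊗ X ⟶ F
  dinatural : ∀ {X Y : C} (f : X ⟶ Y), (fᘁ ⊗ₘ 𝟙 X) ≫ ι X = (𝟙 Yᘁ ⊗ₘ f) ≫ ι Y
  universal : ∀ {F' : C} (ι' : ∀ X : C, Xᘁ ⊗ X ⟶ F'),
      (∀ {X Y : C} (f : X ⟶ Y), (fᘁ ⊗ₘ 𝟙 X) ≫ ι' X = (𝟙 Yᘁ ⊗ₘ f) ≫ ι' Y) →
      ∃! φ : F ⟶ F', ∀ X : C, ι X ≫ φ = ι' X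

/-- The coend `F_S = ∫^{X ∈ S} X* ⊗ X` over the full subcategory determined by a
predicate `S`, regarded as an object of the ambient category. -/
structure RelCoend (S : C → Prop) where
  F : C
  ι : ∀ X : C, S X → (Xᘁ ⊗ X ⟶ F)
  dinatural : ∀ {X Y : C} (hX : S X) (hY : S Y) (f : X ⟶ Y),
      (fᘁ ⊗ₘ 𝟙 X) ≫ ι X hX = (𝟙 Yᘁ ⊗ₘ f) ≫ ι Y hY
  universal : ∀ {F' : C} (ι' : ∀ X : C, S X → (Xᘁ ⊗ X ⟶ F')),
      (∀ {X Y : C} (hX : S X) (hY : S Y) (f : X ⟶ Y),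
        (fᘁ ⊗ₘ 𝟙 X) ≫ ι' X hX = (𝟙 Yᘁ ⊗ₘ f) ≫ ι' Y hY) →
      ∃! φ : F ⟶ F', ∀ (X : C) (hX : S X), ι X hX ≫ φ = ι' X hX

end Coends

section Braided

variable [BraidedCategory C]

/-- The double braiding (monodromy) `σ_{Y,X} ∘ σ_{X,Y} : X ⊗ Y ⟶ X ⊗ Y`. -/
def dbl (X Y : C) : X ⊗ Y ⟶ X ⊗ Y := (β_ X Y).hom ≫ (β_ Y X).hom

/-- An object `T` is transparent if the double braiding with every object is trivial. -/
def Transparent (T : C) : Prop := ∀ X : C, dbl C T X = 𝟙 (T ⊗ X)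

variable [RightRigidCategory C]

/-- The double braiding applied "in the middle" of `(X* ⊗ X) ⊗ (Y* ⊗ Y)`. -/
def dblMiddle (X Y : C) : (Xᘁ ⊗ X) ⊗ (Yᘁ ⊗ Y) ⟶ (Xᘁ ⊗ X) ⊗ (Yᘁ ⊗ Y) :=
  (α_ (Xᘁ) X (Yᘁ ⊗ Y)).hom ≫ (𝟙 (Xᘁ) ⊗ₘ (α_ X (Yᘁ) Y).inv) ≫
  (𝟙 (Xᘁ) ⊗ₘ (dbl C X (Yᘁ) ⊗ₘ 𝟙 Y)) ≫ (𝟙 (Xᘁ) ⊗ₘ (α_ X (Yᘁ) Y).hom) ≫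
  (α_ (Xᘁ) X (Yᘁ ⊗ Y)).inv

variable {C}

/-- The canonical Hopf pairing `ω : F ⊗ F ⟶ 1` of the coend, characterized by
`ω ∘ (ι_X ⊗ ι_Y) = (ev_X ⊗ ev_Y) ∘ (id ⊗ σ_{Y*,X} σ_{X,Y*} ⊗ id)`. -/
structure CoendPairing (𝔽 : Coend C) where
  ω : 𝔽.F ⊗ 𝔽.F ⟶ 𝟙_ C
  char : ∀ X Y : C, (𝔽.ι X ⊗ₘ 𝔽.ι Y) ≫ ω =
      dblMiddle C X Y ≫ (ε_ X (Xᘁ) ⊗ₘ ε_ Y (Yᘁ)) ≫ (λ_ (𝟙_ C)).hom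

/-- The morphism `F ⟶ F*` induced by the pairing `ω`. -/
noncomputable def CoendPairing.toDual {𝔽 : Coend C} (p : CoendPairing 𝔽) :
    𝔽.F ⟶ ((𝔽.F)ᘁ) :=
  (ρ_ 𝔽.F).inv ≫ (𝟙 𝔽.F ⊗ₘ η_ 𝔽.F ((𝔽.F)ᘁ)) ≫ (α_ 𝔽.F 𝔽.F ((𝔽.F)ᘁ)).inv ≫
    (p.ω ⊗ₘ 𝟙 ((𝔽.F)ᘁ)) ≫ (λ_ ((𝔽.F)ᘁ)).hom

/-- Non-degeneracy: the morphism `F ⟶ F*` induced by `ω` is an isomorphism. -/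
def CoendPairing.NonDegenerate {𝔽 : Coend C} (p : CoendPairing 𝔽) : Prop :=
  IsIso p.toDual

/-- The map `Φ_C : Hom(1, F) → Hom(F, 1)`, `χ ↦ ω ∘ (χ ⊗ id_F)`. -/
def CoendPairing.Phi {𝔽 : Coend C} (p : CoendPairing 𝔽) :
    (𝟙_ C ⟶ 𝔽.F) → (𝔽.F ⟶ 𝟙_ C) :=
  fun χ => (λ_ 𝔽.F).inv ≫ (χ ⊗ₘ 𝟙 𝔽.F) ≫ p.ω

variable (C)

/-- A twist (ribbon structure) on a braided rigid category. -/
structure Twist where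
  θ : ∀ X : C, X ⟶ X
  isIso : ∀ X, IsIso (θ X)
  natural : ∀ {X Y : C} (f : X ⟶ Y), f ≫ θ Y = θ X ≫ f
  tensor : ∀ X Y : C, θ (X ⊗ Y) = dbl C X Y ≫ (θ X ⊗ₘ θ Y)
  unit : θ (𝟙_ C) = 𝟙 (𝟙_ C)
  dual : ∀ X : C, θ (Xᘁ) = (θ X)ᘁ

variable {C}

/-- A Hopf algebra structure on the coend `F`, whose coalgebra part is the canonical
one: `Δ ∘ ι_X = (ι_X ⊗ ι_X) ∘ (id ⊗ coev_X ⊗ id)` and `ε ∘ ι_X = ev_X`. -/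
structure CoendHopf (𝔽 : Coend C) where
  mul : 𝔽.F ⊗ 𝔽.F ⟶ 𝔽.F
  unit : 𝟙_ C ⟶ 𝔽.F
  comul : 𝔽.F ⟶ 𝔽.F ⊗ 𝔽.F
  counit : 𝔽.F ⟶ 𝟙_ C
  antipode : 𝔽.F ⟶ 𝔽.F
  comul_char : ∀ X : C, 𝔽.ι X ≫ comul =
      (𝟙 (Xᘁ) ⊗ₘ ((λ_ X).inv ≫ (η_ X (Xᘁ) ⊗ₘ 𝟙 X) ≫ (α_ X (Xᘁ) X).hom)) ≫
      (α_ (Xᘁ) X ((Xᘁ) ⊗ X)).inv ≫ (𝔽.ι X ⊗ₘ 𝔽.ι X)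
  counit_char : ∀ X : C, 𝔽.ι X ≫ counit = ε_ X (Xᘁ)
  mul_assoc' : (mul ⊗ₘ 𝟙 𝔽.F) ≫ mul = (α_ 𝔽.F 𝔽.F 𝔽.F).hom ≫ (𝟙 𝔽.F ⊗ₘ mul) ≫ mul
  one_mul' : (unit ⊗ₘ 𝟙 𝔽.F) ≫ mul = (λ_ 𝔽.F).hom
  mul_one' : (𝟙 𝔽.F ⊗ₘ unit) ≫ mul = (ρ_ 𝔽.F).hom
  comul_assoc' : comul ≫ (comul ⊗ₘ 𝟙 𝔽.F) ≫ (α_ 𝔽.F 𝔽.F 𝔽.F).hom = comul ≫ (𝟙 𝔽.F ⊗ₘ comul)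
  counit_comul' : comul ≫ (counit ⊗ₘ 𝟙 𝔽.F) = (λ_ 𝔽.F).inv
  comul_counit' : comul ≫ (𝟙 𝔽.F ⊗ₘ counit) = (ρ_ 𝔽.F).inv
  mul_comul' : mul ≫ comul = (comul ⊗ₘ comul) ≫ tensorμ 𝔽.F 𝔽.F 𝔽.F 𝔽.F ≫ (mul ⊗ₘ mul)
  unit_comul' : unit ≫ comul = (λ_ (𝟙_ C)).inv ≫ (unit ⊗ₘ unit)
  mul_counit' : mul ≫ counit = (counit ⊗ₘ counit) ≫ (λ_ (𝟙_ C)).hom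
  unit_counit' : unit ≫ counit = 𝟙 (𝟙_ C)
  antipode_left : comul ≫ (antipode ⊗ₘ 𝟙 𝔽.F) ≫ mul = counit ≫ unit
  antipode_right : comul ≫ (𝟙 𝔽.F ⊗ₘ antipode) ≫ mul = counit ≫ unit

variable {𝔽 : Coend C}

/-- A two-sided `1`-based integral `Λ : 1 ⟶ F` of the coend Hopf algebra. -/
def IsIntegral [Preadditive C] (H : CoendHopf 𝔽) (Λ : 𝟙_ C ⟶ 𝔽.F) : Prop :=
  Λ ≠ 0 ∧ (ρ_ 𝔽.F).inv ≫ (𝟙 𝔽.F ⊗ₘ Λ) ≫ H.mul = H.counit ≫ Λ ∧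
    (λ_ 𝔽.F).inv ≫ (Λ ⊗ₘ 𝟙 𝔽.F) ≫ H.mul = H.counit ≫ Λ

/-- Normalization `ω ∘ (Λ ⊗ Λ) = id₁` of an integral against the pairing. -/
def IsNormalized (ω : 𝔽.F ⊗ 𝔽.F ⟶ 𝟙_ C) (Λ : 𝟙_ C ⟶ 𝔽.F) : Prop :=
  (λ_ (𝟙_ C)).inv ≫ (Λ ⊗ₘ Λ) ≫ ω = 𝟙 (𝟙_ C)

/-- `Ω` is the monodromy of the coend:
`Ω ∘ (ι_X ⊗ ι_Y) = (ι_X ⊗ ι_Y) ∘ (id ⊗ σ_{Y*,X} σ_{X,Y*} ⊗ id)`. -/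
def IsMonodromy (Ω : 𝔽.F ⊗ 𝔽.F ⟶ 𝔽.F ⊗ 𝔽.F) : Prop :=
  ∀ X Y : C, (𝔽.ι X ⊗ₘ 𝔽.ι Y) ≫ Ω = dblMiddle C X Y ≫ (𝔽.ι X ⊗ₘ 𝔽.ι Y)

/-- Lyubashenko's map `S = (ε ⊗ id) ∘ Ω ∘ (id ⊗ Λ) : F ⟶ F`. -/
def lyubashenkoS (H : CoendHopf 𝔽) (Ω : 𝔽.F ⊗ 𝔽.F ⟶ 𝔽.F ⊗ 𝔽.F) (Λ : 𝟙_ C ⟶ 𝔽.F) :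
    𝔽.F ⟶ 𝔽.F :=
  (ρ_ 𝔽.F).inv ≫ (𝟙 𝔽.F ⊗ₘ Λ) ≫ Ω ≫ (H.counit ⊗ₘ 𝟙 𝔽.F) ≫ (λ_ 𝔽.F).hom

/-- The canonical right coaction `ρ_X = (id ⊗ ι_X) ∘ (coev_X ⊗ id) : X ⟶ X ⊗ F`. -/
def coact (𝔽 : Coend C) (X : C) : X ⟶ X ⊗ 𝔽.F :=
  (λ_ X).inv ≫ (η_ X (Xᘁ) ⊗ₘ 𝟙 X) ≫ (α_ X (Xᘁ) X).hom ≫ (𝟙 X ⊗ₘ 𝔽.ι X)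

/-- The endomorphism `ã` of the identity functor associated with `a : F ⟶ 1`,
with components `ã_X = (id_X ⊗ a) ∘ ρ_X`. -/
def tilde (𝔽 : Coend C) (a : 𝔽.F ⟶ 𝟙_ C) : ∀ X : C, X ⟶ X :=
  fun X => coact 𝔽 X ≫ (𝟙 X ⊗ₘ a) ≫ (ρ_ X).hom

/-- The isomorphism `Hom(F, 1) → Hom(1, F)`, `f ↦ (f ⊗ id_F) ∘ Δ ∘ Λ`. -/
def intHom (H : CoendHopf 𝔽) (Λ : 𝟙_ C ⟶ 𝔽.F) : (𝔽.F ⟶ 𝟙_ C) → (𝟙_ C ⟶ 𝔽.F) :=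
  fun f => Λ ≫ H.comul ≫ (f ⊗ₘ 𝟙 𝔽.F) ≫ (λ_ 𝔽.F).hom

/-- The Drinfeld morphism `u_X : X ⟶ X**`. -/
def drinfeldU (X : C) : X ⟶ ((Xᘁ)ᘁ) :=
  (ρ_ X).inv ≫ (𝟙 X ⊗ₘ η_ (Xᘁ) ((Xᘁ)ᘁ)) ≫ (α_ X (Xᘁ) ((Xᘁ)ᘁ)).inv ≫
    ((β_ X (Xᘁ)).hom ⊗ₘ 𝟙 ((Xᘁ)ᘁ)) ≫ (ε_ X (Xᘁ) ⊗ₘ 𝟙 ((Xᘁ)ᘁ)) ≫ (λ_ ((Xᘁ)ᘁ)).hom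

/-- The internal character `ch(V) = ι_{V*} ∘ (p_V ⊗ id) ∘ coev_V : 1 ⟶ F` of `V`, with
respect to a pivotal family `p X : X ⟶ X**`. -/
def internalChar (𝔽 : Coend C) (p : ∀ X : C, X ⟶ ((Xᘁ)ᘁ)) (V : C) : 𝟙_ C ⟶ 𝔽.F :=
  η_ V (Vᘁ) ≫ (p V ⊗ₘ 𝟙 (Vᘁ)) ≫ 𝔽.ι (Vᘁ)

/-- The twisted coevaluation `coev'_V = (id ⊗ θ_V) ∘ σ_{V,V*} ∘ coev_V : 1 ⟶ V* ⊗ V`. -/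
def coev' (θ : ∀ X : C, X ⟶ X) (V : C) : 𝟙_ C ⟶ ((Vᘁ) ⊗ V) :=
  η_ V (Vᘁ) ≫ (β_ V (Vᘁ)).hom ≫ (𝟙 (Vᘁ) ⊗ₘ θ V)

variable (C)

/-- The Müger center of `C` is trivial: every transparent object is a finite direct
sum of copies of the tensor unit. -/
def MugerTrivial [Preadditive C] [HasFiniteBiproducts C] : Prop :=
  ∀ T : C, Transparent C T → ∃ n : ℕ, Nonempty (T ≅ ⨁ (fun _ : Fin n => 𝟙_ C))

end Braided

section FP

variable [Abelian C]

/-- Data of the Frobenius–Perron dimension function on the (tensor full) subcategory of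
`C` determined by the predicate `S`: the unique ring homomorphism `Gr(S) → ℝ` strictly
positive on nonzero objects, presented as a function on objects which is additive on
short exact sequences in `S`, multiplicative on tensor products and normalized. -/
structure FPDimData (S : C → Prop) where
  d : C → ℝ
  pos : ∀ X : C, S X → ¬ IsZero X → 0 < d X
  additive : ∀ T : ShortComplex C, T.ShortExact →
      S T.X₁ → S T.X₂ → S T.X₃ → d T.X₂ = d T.X₁ + d T.X₃
  mul : ∀ X Y : C, S X → S Y → d (X ⊗ Y) = d X * d Y
  one : d (𝟙_ C) = 1

/-- A complete set of representatives `V i` of the isomorphism classes of simple objects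
of the full abelian subcategory of `C` determined by `S`, together with projective
covers `P i → V i` computed inside that subcategory. -/
structure SimplesData (S : C → Prop) where
  n : ℕ
  V : Fin n → C
  memV : ∀ i, S (V i)
  simple : ∀ i, Simple (V i)
  noniso : ∀ i j, i ≠ j → IsEmpty (V i ≅ V j)
  complete : ∀ X : C, S X → Simple X → ∃ i, Nonempty (X ≅ V i)
  P : Fin n → C
  memP : ∀ i, S (P i)
  π : ∀ i, P i ⟶ V i
  epi : ∀ i, Epi (π i)
  proj : ∀ (i) (A B : C), S A → S B → ∀ g : A ⟶ B, Epi g →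
      ∀ h : P i ⟶ B, ∃ h' : P i ⟶ A, h' ≫ g = h
  essential : ∀ (i) (Q : C) (g : Q ⟶ P i), S Q → Epi (g ≫ π i) → Epi g

/-- `FPdim(S) = ∑ᵢ FPdim(Pᵢ)·FPdim(Vᵢ)`. -/
noncomputable def catFPdim {S : C → Prop} (fp : FPDimData C S) (sd : SimplesData C S) :
    ℝ :=
  ∑ i : Fin sd.n, fp.d (sd.P i) * fp.d (sd.V i)

/-- A complete set of representatives of the isomorphism classes of simple objects. -/
structure SimpleReps where
  n : ℕ
  V : Fin n → C
  simple : ∀ i, Simple (V i)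
  noniso : ∀ i j, i ≠ j → IsEmpty (V i ≅ V j)
  complete : ∀ X : C, Simple X → ∃ i, Nonempty (X ≅ V i)

/-- `π : P ⟶ X` exhibits `P` as a projective cover of `X`. -/
def IsProjectiveCover {P X : C} (π : P ⟶ X) : Prop :=
  Projective P ∧ Epi π ∧ ∀ (Q : C) (g : Q ⟶ P), Epi (g ≫ π) → Epi g

/-- `W` is a semisimple object: a finite direct sum of simple objects. -/
def IsSemisimpleObj (W : C) : Prop :=
  ∃ (n : ℕ) (f : Fin n → C), (∀ i, Simple (f i)) ∧ Nonempty (W ≅ ⨁ f)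

/-- `s : W ⟶ X` exhibits `W` as the socle (the largest semisimple subobject) of `X`. -/
def IsSocle {W X : C} (s : W ⟶ X) : Prop :=
  Mono s ∧ IsSemisimpleObj C W ∧
    ∀ (W' : C) (t : W' ⟶ X), Mono t → IsSemisimpleObj C W' → ∃ u : W' ⟶ W, u ≫ s = t

variable [RightRigidCategory C]

/-- `D` is the distinguished invertible object of `C`: the socle of `P₀*`, where
`π : P₀ ⟶ 1` is the projective cover of the unit object. -/
def IsDistInvertible (D : C) : Prop :=
  ∃ (P₀ : C) (π : P₀ ⟶ 𝟙_ C), IsProjectiveCover C π ∧ ∃ s : D ⟶ (P₀ᘁ), IsSocle C s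

/-- `C` is unimodular: the distinguished invertible object is isomorphic to the unit. -/
def Unimodular : Prop :=
  ∃ D : C, IsDistInvertible C D ∧ Nonempty (D ≅ 𝟙_ C)

variable [LeftRigidCategory C]

/-- A tensor full subcategory: a nonzero full subcategory closed under finite direct
sums, subquotients, tensor products, and left and right duals. -/
structure IsTensorFullSub (S : C → Prop) : Prop where
  nonzero : ∃ X, S X ∧ ¬ IsZero X
  biprod : ∀ {X Y : C}, S X → S Y → S (X ⊞ Y)
  subquot : ∀ {X M : C}, S M → IsSubquotient C X M → S X
  tensor : ∀ {X Y : C}, S X → S Y → S (X ⊗ Y)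
  rdual : ∀ {X : C}, S X → S (Xᘁ)
  ldual : ∀ {X : C}, S X → S (ᘁX)

/-- The subcategory `X ∨ Y`: the image of the tensor functor `X ⊠ Y → C`, i.e. the
class of subquotients of finite direct sums of objects `x ⊗ y` with `x ∈ X`, `y ∈ Y`. -/
def veeSub (SX SY : C → Prop) : C → Prop := fun Z =>
  ∃ (n : ℕ) (x y : Fin n → C), (∀ i, SX (x i)) ∧ (∀ i, SY (y i)) ∧
    IsSubquotient C Z (⨁ fun i => x i ⊗ y i)

end FP

section Pivotal

variable [RightRigidCategory C]

/-- The canonical "nested evaluation" `(Y* ⊗ X*) ⊗ (X ⊗ Y) ⟶ 1`. -/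
def nestedEval (X Y : C) : ((Yᘁ) ⊗ (Xᘁ)) ⊗ (X ⊗ Y) ⟶ 𝟙_ C :=
  (α_ (Yᘁ) (Xᘁ) (X ⊗ Y)).hom ≫
    (𝟙 (Yᘁ) ⊗ₘ ((α_ (Xᘁ) X Y).inv ≫ (ε_ X (Xᘁ) ⊗ₘ 𝟙 Y) ≫ (λ_ Y).hom)) ≫ ε_ Y (Yᘁ)

/-- A pivotal structure: a monoidal natural isomorphism `id ≅ (−)**`.  Its monoidality
is expressed via the canonical isomorphisms `Y* ⊗ X* ≅ (X ⊗ Y)*` (characterized by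
compatibility with the evaluations), which are part of the data. -/
structure PivotalData where
  dTI : ∀ X Y : C, ((Yᘁ) ⊗ (Xᘁ)) ≅ ((X ⊗ Y)ᘁ)
  dTI_char : ∀ X Y : C,
    ((dTI X Y).hom ⊗ₘ 𝟙 (X ⊗ Y)) ≫ ε_ (X ⊗ Y) ((X ⊗ Y)ᘁ) = nestedEval C X Y
  p : ∀ X : C, X ⟶ ((Xᘁ)ᘁ)
  isIso : ∀ X, IsIso (p X)
  natural : ∀ {X Y : C} (f : X ⟶ Y), f ≫ p Y = p X ≫ ((fᘁ)ᘁ)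
  tensor : ∀ X Y : C, p (X ⊗ Y) =
    (p X ⊗ₘ p Y) ≫ (dTI (Yᘁ) (Xᘁ)).hom ≫ (((dTI X Y).inv)ᘁ)

variable [Abelian C]

/-- Data of the distinguished invertible object `α` together with the Radford
isomorphism `δ_X : α ⊗ X ⊗ α* ≅ X****` of Etingof–Nikshych–Ostrik. -/
structure RadfordData where
  α : C
  dist : IsDistInvertible C α
  δ : ∀ X : C, (α ⊗ (X ⊗ (αᘁ))) ≅ (((((Xᘁ)ᘁ)ᘁ)ᘁ))
  natural : ∀ {X Y : C} (f : X ⟶ Y),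
    (𝟙 α ⊗ₘ (f ⊗ₘ 𝟙 (αᘁ))) ≫ (δ Y).hom = (δ X).hom ≫ ((((fᘁ)ᘁ)ᘁ)ᘁ)

/-- `C` is spherical in the sense of Douglas–Schommer-Pries–Snyder: there is a pivotal
structure `p` such that for `β = 1` one has `β ⊗ β ≅ α` and, under this isomorphism,
the square of `p` coincides with the Radford isomorphism `δ`. -/
def SphericalDSPS (rd : RadfordData C) : Prop :=
  ∃ (pd : PivotalData C) (a : rd.α ≅ 𝟙_ C) (h : ((rd.α)ᘁ) ≅ 𝟙_ C),
    ((h.inv ⊗ₘ a.inv) ≫ ε_ rd.α ((rd.α)ᘁ) = (λ_ (𝟙_ C)).hom) ∧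
    ∀ X : C, (rd.δ X).hom =
      (a.hom ⊗ₘ (𝟙 X ⊗ₘ h.hom)) ≫ (𝟙 (𝟙_ C) ⊗ₘ (ρ_ X).hom) ≫ (λ_ X).hom ≫
        pd.p X ≫ pd.p ((Xᘁ)ᘁ)

end Pivotal

section Deligne

variable (k)
variable [Abelian C] [Linear k C]

/-- A bifunctor which is `k`-bilinear and right exact in each variable. -/
def BilinearRightExact {E : Type v} [Category.{w} E] [Abelian E] [Linear k E]
    (Fb : C ⥤ C ⥤ E) : Prop :=
  (∀ X : C, (Fb.obj X).Additive) ∧ (∀ Y : C, (Fb.flip.obj Y).Additive) ∧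
  (∀ X : C, PreservesFiniteColimits (Fb.obj X)) ∧
  (∀ Y : C, PreservesFiniteColimits (Fb.flip.obj Y)) ∧
  (∀ (X : C) (c : k) {Y Y' : C} (g : Y ⟶ Y'),
      (Fb.obj X).map (c • g) = c • (Fb.obj X).map g) ∧
  (∀ (c : k) {X X' : C} (f : X ⟶ X') (Y : C),
      (Fb.map (c • f)).app Y = c • (Fb.map f).app Y)

/-- A functor which is additive, `k`-linear and right exact. -/
def LinearRightExact {P : Type v} [Category.{w} P] [Preadditive P] [Linear k P]
    {E : Type v'} [Category.{w'} E] [Preadditive E] [Linear k E] (G : P ⥤ E) : Prop :=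
  G.Additive ∧ (∀ (c : k) {X Y : P} (f : X ⟶ Y), G.map (c • f) = c • G.map f) ∧
    PreservesFiniteColimits G

/-- `(P, T)` is a Deligne tensor product `C ⊠ C`: the bifunctor `T` is `k`-bilinear and
right exact in each variable, and universal among such bifunctors with values in
`k`-linear abelian categories. -/
structure IsDeligneProduct (P : Type v) [Category.{w} P] [Abelian P] [Linear k P]
    (T : C ⥤ C ⥤ P) : Prop where
  bilex : BilinearRightExact k C T
  lift : ∀ (E : Type v) [Category.{w} E] [Abelian E] [Linear k E] (Fb : C ⥤ C ⥤ E),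
    BilinearRightExact k C Fb →
    ∃ G : P ⥤ E, LinearRightExact k G ∧
      Nonempty ((T ⋙ (Functor.whiskeringRight C P E).obj G) ≅ Fb)
  unique : ∀ (E : Type v) [Category.{w} E] [Abelian E] [Linear k E] (G G' : P ⥤ E),
    LinearRightExact k G → LinearRightExact k G' →
    Nonempty ((T ⋙ (Functor.whiskeringRight C P E).obj G) ≅
      (T ⋙ (Functor.whiskeringRight C P E).obj G')) →
    Nonempty (G ≅ G')

variable [BraidedCategory C]

/-- The bifunctor `C × C ⥤ Z(C)`, `(X, Y) ↦ T₊(X) ⊗ T₋(Y)`, where `T₊(X) = (X, σ_{X,−})`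
and `T₋(Y) = (Y, σ_{−,Y}⁻¹)`. -/
noncomputable def centerBifunctor : C ⥤ C ⥤ Center C :=
  Center.ofBraided C ⋙ curriedTensor (Center C) ⋙
    (Functor.whiskeringLeft C (Center C) (Center C)).obj
      (@Center.ofBraided C _ _ (reverseBraiding C))

end Deligne

end NonSSMTC

/-!
`Hom(1, F)` and `Hom(F, 1)` are Mathlib's convolution monoids `Conv (𝟙_ C) F` and `Conv F (𝟙_ C)`
for the trivial (co)monoid structure on `𝟙_ C`, so associativity and unitality of `⋆` are
inherited from there, and bilinearity is that of `⊗` in a linear monoidal category. `Φ` is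
multiplicative because `ω` is a Hopf pairing: `ω(m(f ⊗ g) ⊗ -)` becomes `(ω(f ⊗ -) ⊗ ω(g ⊗ -)) ∘ Δ`
once `f ⊗ g` is slid through the interchange `tensorμ` and the unitors are cancelled; `Φ(1) = ε`
is the unit axiom of the pairing.
-/

open scoped CategoryTheory.MonObj CategoryTheory.ComonObj

namespace CategoryTheory

variable {C : Type*} [Category C] [MonoidalCategory C]

section Convolution

attribute [local instance] ComonObj.instTensorUnit

variable {M N : C} [ComonObj M] [MonObj N]

theorem Conv.point_mul_eq (f g : Conv (𝟙_ C) N) :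
    f * g = (λ_ (𝟙_ C)).inv ≫ (f ⊗ₘ g) ≫ μ[N] :=
  congrArg _ (tensorHom_def_assoc (C := C) f g μ[N]).symm

theorem Conv.point_one_eq : (1 : Conv (𝟙_ C) N) = η[N] :=
  Category.id_comp _

theorem Conv.copoint_mul_eq (a b : Conv M (𝟙_ C)) :
    a * b = Δ[M] ≫ (a ⊗ₘ b) ≫ (λ_ (𝟙_ C)).hom :=
  congrArg _ (tensorHom_def_assoc (C := C) a b (λ_ (𝟙_ C)).hom).symm

theorem Conv.copoint_one_eq : (1 : Conv M (𝟙_ C)) = ε[M] :=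
  Category.comp_id _

theorem Conv.point_mul_assoc (f g h : Conv (𝟙_ C) N) :
    (λ_ (𝟙_ C)).inv ≫ (((λ_ (𝟙_ C)).inv ≫ (f ⊗ₘ g) ≫ μ[N]) ⊗ₘ h) ≫ μ[N] =
      (λ_ (𝟙_ C)).inv ≫ (f ⊗ₘ ((λ_ (𝟙_ C)).inv ≫ (g ⊗ₘ h) ≫ μ[N])) ≫ μ[N] := by
  have hassoc := mul_assoc f g h
  rwa [Conv.point_mul_eq, Conv.point_mul_eq, Conv.point_mul_eq, Conv.point_mul_eq] at hassoc

theorem Conv.point_one_mul (f : Conv (𝟙_ C) N) : (λ_ (𝟙_ C)).inv ≫ (η[N] ⊗ₘ f) ≫ μ[N] = f := by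
  have h := one_mul f
  rwa [Conv.point_mul_eq, Conv.point_one_eq] at h

theorem Conv.point_mul_one (f : Conv (𝟙_ C) N) : (λ_ (𝟙_ C)).inv ≫ (f ⊗ₘ η[N]) ≫ μ[N] = f := by
  have h := mul_one f
  rwa [Conv.point_mul_eq, Conv.point_one_eq] at h

theorem Conv.copoint_mul_assoc (a b c : Conv M (𝟙_ C)) :
    Δ[M] ≫ ((Δ[M] ≫ (a ⊗ₘ b) ≫ (λ_ (𝟙_ C)).hom) ⊗ₘ c) ≫ (λ_ (𝟙_ C)).hom =
      Δ[M] ≫ (a ⊗ₘ (Δ[M] ≫ (b ⊗ₘ c) ≫ (λ_ (𝟙_ C)).hom)) ≫ (λ_ (𝟙_ C)).hom := by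
  have hassoc := mul_assoc a b c
  rwa [Conv.copoint_mul_eq, Conv.copoint_mul_eq, Conv.copoint_mul_eq, Conv.copoint_mul_eq]
    at hassoc

theorem Conv.copoint_one_mul (a : Conv M (𝟙_ C)) : Δ[M] ≫ (ε[M] ⊗ₘ a) ≫ (λ_ (𝟙_ C)).hom = a := by
  have h := one_mul a
  rwa [Conv.copoint_mul_eq, Conv.copoint_one_eq] at h

theorem Conv.copoint_mul_one (a : Conv M (𝟙_ C)) : Δ[M] ≫ (a ⊗ₘ ε[M]) ≫ (λ_ (𝟙_ C)).hom = a := by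
  have h := mul_one a
  rwa [Conv.copoint_mul_eq, Conv.copoint_one_eq] at h

end Convolution

section Bilinear

variable [Preadditive C] [MonoidalPreadditive C] {X X' Y Y' Z W : C}

theorem comp_add_tensorHom_comp (u : Z ⟶ X ⊗ Y) (f f' : X ⟶ X') (g : Y ⟶ Y')
    (v : X' ⊗ Y' ⟶ W) : u ≫ ((f + f') ⊗ₘ g) ≫ v = u ≫ (f ⊗ₘ g) ≫ v + u ≫ (f' ⊗ₘ g) ≫ v := by
  rw [MonoidalPreadditive.add_tensor, Preadditive.add_comp, Preadditive.comp_add]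

theorem comp_tensorHom_add_comp (u : Z ⟶ X ⊗ Y) (f : X ⟶ X') (g g' : Y ⟶ Y')
    (v : X' ⊗ Y' ⟶ W) : u ≫ (f ⊗ₘ (g + g')) ≫ v = u ≫ (f ⊗ₘ g) ≫ v + u ≫ (f ⊗ₘ g') ≫ v := by
  rw [MonoidalPreadditive.tensor_add, Preadditive.add_comp, Preadditive.comp_add]

variable {R : Type*} [Semiring R] [Linear R C] [MonoidalLinear R C]

theorem comp_smul_tensorHom_comp (u : Z ⟶ X ⊗ Y) (r : R) (f : X ⟶ X') (g : Y ⟶ Y')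
    (v : X' ⊗ Y' ⟶ W) : u ≫ ((r • f) ⊗ₘ g) ≫ v = r • (u ≫ (f ⊗ₘ g) ≫ v) := by
  rw [MonoidalCategory.tensorHom_def, MonoidalLinear.smul_whiskerRight, Linear.smul_comp,
    Linear.smul_comp, Linear.comp_smul, ← MonoidalCategory.tensorHom_def]

theorem comp_tensorHom_smul_comp (u : Z ⟶ X ⊗ Y) (r : R) (f : X ⟶ X') (g : Y ⟶ Y')
    (v : X' ⊗ Y' ⟶ W) : u ≫ (f ⊗ₘ (r • g)) ≫ v = r • (u ≫ (f ⊗ₘ g) ≫ v) := by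
  rw [MonoidalCategory.tensorHom_def, MonoidalLinear.whiskerLeft_smul, Linear.comp_smul,
    Linear.smul_comp, Linear.comp_smul, ← MonoidalCategory.tensorHom_def]

end Bilinear

section Pairing

variable [BraidedCategory C]

theorem tensor_left_unitality_inv (X Y : C) :
    (λ_ (X ⊗ Y)).inv ≫ (λ_ (𝟙_ C)).inv ▷ (X ⊗ Y) ≫ tensorμ (𝟙_ C) (𝟙_ C) X Y =
      (λ_ X).inv ⊗ₘ (λ_ Y).inv := by
  rw [← cancel_mono ((λ_ X).hom ⊗ₘ (λ_ Y).hom), Category.assoc, Category.assoc,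
    ← tensor_left_unitality, tensorHom_comp_tensorHom]
  simp

theorem pairing_point_mul {A B : C} {μA : A ⊗ A ⟶ A} {ΔB : B ⟶ B ⊗ B} {ω : A ⊗ B ⟶ 𝟙_ C}
    (h : (μA ⊗ₘ 𝟙 B) ≫ ω = (𝟙 (A ⊗ A) ⊗ₘ ΔB) ≫ tensorμ A A B B ≫ (ω ⊗ₘ ω) ≫ (λ_ (𝟙_ C)).hom)
    (f g : 𝟙_ C ⟶ A) :
    (λ_ B).inv ≫ (((λ_ (𝟙_ C)).inv ≫ (f ⊗ₘ g) ≫ μA) ⊗ₘ 𝟙 B) ≫ ω =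
      ΔB ≫ (((λ_ B).inv ≫ (f ⊗ₘ 𝟙 B) ≫ ω) ⊗ₘ ((λ_ B).inv ≫ (g ⊗ₘ 𝟙 B) ≫ ω)) ≫
        (λ_ (𝟙_ C)).hom := by
  simp only [tensorHom_id, id_tensorHom] at h ⊢
  calc (λ_ B).inv ≫ ((λ_ (𝟙_ C)).inv ≫ (f ⊗ₘ g) ≫ μA) ▷ B ≫ ω
      = (λ_ B).inv ≫ (λ_ (𝟙_ C)).inv ▷ B ≫ (f ⊗ₘ g) ▷ B ≫ (A ⊗ A) ◁ ΔB ≫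
          tensorμ A A B B ≫ (ω ⊗ₘ ω) ≫ (λ_ (𝟙_ C)).hom := by
        simp only [comp_whiskerRight, Category.assoc, h]
    _ = ΔB ≫ (λ_ (B ⊗ B)).inv ≫ (λ_ (𝟙_ C)).inv ▷ (B ⊗ B) ≫ tensorμ (𝟙_ C) (𝟙_ C) B B ≫
          (f ▷ B ⊗ₘ g ▷ B) ≫ (ω ⊗ₘ ω) ≫ (λ_ (𝟙_ C)).hom := by
        rw [← whisker_exchange_assoc, tensorμ_natural_left_assoc, ← whisker_exchange_assoc,
          ← leftUnitor_inv_naturality_assoc]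
    _ = ΔB ≫ (((λ_ B).inv ≫ f ▷ B ≫ ω) ⊗ₘ ((λ_ B).inv ≫ g ▷ B ≫ ω)) ≫ (λ_ (𝟙_ C)).hom := by
        rw [reassoc_of% tensor_left_unitality_inv, tensorHom_comp_tensorHom_assoc,
          tensorHom_comp_tensorHom_assoc]
        simp only [Category.assoc]

end Pairing

end CategoryTheory

namespace NonSSMTC

section CoendHopf

variable {C : Type*} [Category C] [MonoidalCategory C] [BraidedCategory C]
  [RightRigidCategory C] {𝔽 : Coend C}

abbrev CoendHopf.monObj (H : CoendHopf 𝔽) : MonObj 𝔽.F where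
  one := H.unit
  mul := H.mul
  one_mul := by simpa only [tensorHom_id] using H.one_mul'
  mul_one := by simpa only [id_tensorHom] using H.mul_one'
  mul_assoc := by simpa only [tensorHom_id, id_tensorHom] using H.mul_assoc'

abbrev CoendHopf.comonObj (H : CoendHopf 𝔽) : ComonObj 𝔽.F where
  counit := H.counit
  comul := H.comul
  counit_comul := by simpa only [tensorHom_id] using H.counit_comul'
  comul_counit := by simpa only [id_tensorHom] using H.comul_counit'
  comul_assoc := by simpa only [tensorHom_id, id_tensorHom] using H.comul_assoc'.symm

end CoendHopf

theorem Phi_is_algebra_homomorphism_general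
    (k : Type u) [Field k]
    (C : Type v) [Category.{w} C] [Abelian C] [Linear k C]
    [MonoidalCategory C] [MonoidalPreadditive C] [MonoidalLinear k C]
    [RigidCategory C] [BraidedCategory C]
    (𝔽 : Coend C) (H : CoendHopf 𝔽) (p : CoendPairing 𝔽)
    -- `ω` is a Hopf pairing with respect to the Hopf algebra structure of `F`:
    (hωmul : (H.mul ⊗ₘ 𝟙 𝔽.F) ≫ p.ω =
      (𝟙 (𝔽.F ⊗ 𝔽.F) ⊗ₘ H.comul) ≫ tensorμ 𝔽.F 𝔽.F 𝔽.F 𝔽.F ≫ (p.ω ⊗ₘ p.ω) ≫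
        (λ_ (𝟙_ C)).hom)
    (hωunit : (λ_ 𝔽.F).inv ≫ (H.unit ⊗ₘ 𝟙 𝔽.F) ≫ p.ω = H.counit) :
    -- `Hom(1, F)` is a `k`-algebra under `⋆₁`
    (∀ f f' g : 𝟙_ C ⟶ 𝔽.F,
        (λ_ (𝟙_ C)).inv ≫ ((f + f') ⊗ₘ g) ≫ H.mul =
          (λ_ (𝟙_ C)).inv ≫ (f ⊗ₘ g) ≫ H.mul + (λ_ (𝟙_ C)).inv ≫ (f' ⊗ₘ g) ≫ H.mul) ∧
    (∀ f g g' : 𝟙_ C ⟶ 𝔽.F,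
        (λ_ (𝟙_ C)).inv ≫ (f ⊗ₘ (g + g')) ≫ H.mul =
          (λ_ (𝟙_ C)).inv ≫ (f ⊗ₘ g) ≫ H.mul + (λ_ (𝟙_ C)).inv ≫ (f ⊗ₘ g') ≫ H.mul) ∧
    (∀ (c : k) (f g : 𝟙_ C ⟶ 𝔽.F),
        (λ_ (𝟙_ C)).inv ≫ ((c • f) ⊗ₘ g) ≫ H.mul =
          c • ((λ_ (𝟙_ C)).inv ≫ (f ⊗ₘ g) ≫ H.mul)) ∧
    (∀ (c : k) (f g : 𝟙_ C ⟶ 𝔽.F),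
        (λ_ (𝟙_ C)).inv ≫ (f ⊗ₘ (c • g)) ≫ H.mul =
          c • ((λ_ (𝟙_ C)).inv ≫ (f ⊗ₘ g) ≫ H.mul)) ∧
    (∀ f g h : 𝟙_ C ⟶ 𝔽.F,
        (λ_ (𝟙_ C)).inv ≫ (((λ_ (𝟙_ C)).inv ≫ (f ⊗ₘ g) ≫ H.mul) ⊗ₘ h) ≫ H.mul =
          (λ_ (𝟙_ C)).inv ≫ (f ⊗ₘ ((λ_ (𝟙_ C)).inv ≫ (g ⊗ₘ h) ≫ H.mul)) ≫ H.mul) ∧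
    (∀ f : 𝟙_ C ⟶ 𝔽.F, (λ_ (𝟙_ C)).inv ≫ (H.unit ⊗ₘ f) ≫ H.mul = f) ∧
    (∀ f : 𝟙_ C ⟶ 𝔽.F, (λ_ (𝟙_ C)).inv ≫ (f ⊗ₘ H.unit) ≫ H.mul = f) ∧
    -- `Hom(F, 1)` is a `k`-algebra under `⋆₂`
    (∀ a a' b : 𝔽.F ⟶ 𝟙_ C,
        H.comul ≫ ((a + a') ⊗ₘ b) ≫ (λ_ (𝟙_ C)).hom =
          H.comul ≫ (a ⊗ₘ b) ≫ (λ_ (𝟙_ C)).hom + H.comul ≫ (a' ⊗ₘ b) ≫ (λ_ (𝟙_ C)).hom) ∧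
    (∀ a b b' : 𝔽.F ⟶ 𝟙_ C,
        H.comul ≫ (a ⊗ₘ (b + b')) ≫ (λ_ (𝟙_ C)).hom =
          H.comul ≫ (a ⊗ₘ b) ≫ (λ_ (𝟙_ C)).hom + H.comul ≫ (a ⊗ₘ b') ≫ (λ_ (𝟙_ C)).hom) ∧
    (∀ (c : k) (a b : 𝔽.F ⟶ 𝟙_ C),
        H.comul ≫ ((c • a) ⊗ₘ b) ≫ (λ_ (𝟙_ C)).hom =
          c • (H.comul ≫ (a ⊗ₘ b) ≫ (λ_ (𝟙_ C)).hom)) ∧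
    (∀ (c : k) (a b : 𝔽.F ⟶ 𝟙_ C),
        H.comul ≫ (a ⊗ₘ (c • b)) ≫ (λ_ (𝟙_ C)).hom =
          c • (H.comul ≫ (a ⊗ₘ b) ≫ (λ_ (𝟙_ C)).hom)) ∧
    (∀ a b c : 𝔽.F ⟶ 𝟙_ C,
        H.comul ≫ ((H.comul ≫ (a ⊗ₘ b) ≫ (λ_ (𝟙_ C)).hom) ⊗ₘ c) ≫ (λ_ (𝟙_ C)).hom =
          H.comul ≫ (a ⊗ₘ (H.comul ≫ (b ⊗ₘ c) ≫ (λ_ (𝟙_ C)).hom)) ≫ (λ_ (𝟙_ C)).hom) ∧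
    (∀ a : 𝔽.F ⟶ 𝟙_ C, H.comul ≫ (H.counit ⊗ₘ a) ≫ (λ_ (𝟙_ C)).hom = a) ∧
    (∀ a : 𝔽.F ⟶ 𝟙_ C, H.comul ≫ (a ⊗ₘ H.counit) ≫ (λ_ (𝟙_ C)).hom = a) ∧
    -- `Φ_C` is a homomorphism of `k`-algebras
    (∀ f g : 𝟙_ C ⟶ 𝔽.F,
        p.Phi ((λ_ (𝟙_ C)).inv ≫ (f ⊗ₘ g) ≫ H.mul) =
          H.comul ≫ (p.Phi f ⊗ₘ p.Phi g) ≫ (λ_ (𝟙_ C)).hom) ∧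
    (∀ (c : k) (f : 𝟙_ C ⟶ 𝔽.F), p.Phi (c • f) = c • p.Phi f) ∧
    (∀ f g : 𝟙_ C ⟶ 𝔽.F, p.Phi (f + g) = p.Phi f + p.Phi g) ∧
    p.Phi H.unit = H.counit := by
  let _ := H.monObj
  let _ := H.comonObj
  refine ⟨fun _ _ _ => comp_add_tensorHom_comp _ _ _ _ _,
    fun _ _ _ => comp_tensorHom_add_comp _ _ _ _ _,
    fun _ _ _ => comp_smul_tensorHom_comp _ _ _ _ _,
    fun _ _ _ => comp_tensorHom_smul_comp _ _ _ _ _,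
    Conv.point_mul_assoc, Conv.point_one_mul, Conv.point_mul_one,
    fun _ _ _ => comp_add_tensorHom_comp _ _ _ _ _,
    fun _ _ _ => comp_tensorHom_add_comp _ _ _ _ _,
    fun _ _ _ => comp_smul_tensorHom_comp _ _ _ _ _,
    fun _ _ _ => comp_tensorHom_smul_comp _ _ _ _ _,
    Conv.copoint_mul_assoc, Conv.copoint_one_mul, Conv.copoint_mul_one,
    fun f g => pairing_point_mul hωmul f g,
    fun _ _ => comp_smul_tensorHom_comp _ _ _ _ _,
    fun _ _ => comp_add_tensorHom_comp _ _ _ _ _,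
    hωunit⟩

/-- `Hom(1, F)` is a `k`-algebra under `f ⋆ g = m ∘ (f ⊗ g)`,
`Hom(F, 1)` is a `k`-algebra under `a ⋆ b = (a ⊗ b) ∘ Δ`, and
`Φ_C : Hom(1, F) → Hom(F, 1)` is a homomorphism of `k`-algebras. -/
theorem Phi_is_algebra_homomorphism
    (k : Type u) [Field k] [IsAlgClosed k]
    (C : Type v) [Category.{w} C] [Abelian C] [Linear k C]
    [MonoidalCategory C] [MonoidalPreadditive C] [MonoidalLinear k C]
    [RigidCategory C] [BraidedCategory C]
    (hfin : IsFiniteAbelian k C) (hunit : Simple (𝟙_ C))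
    (𝔽 : Coend C) (H : CoendHopf 𝔽) (p : CoendPairing 𝔽)
    -- `ω` is a Hopf pairing with respect to the Hopf algebra structure of `F`:
    (hωmul : (H.mul ⊗ₘ 𝟙 𝔽.F) ≫ p.ω =
      (𝟙 (𝔽.F ⊗ 𝔽.F) ⊗ₘ H.comul) ≫ tensorμ 𝔽.F 𝔽.F 𝔽.F 𝔽.F ≫ (p.ω ⊗ₘ p.ω) ≫
        (λ_ (𝟙_ C)).hom)
    (hωunit : (λ_ 𝔽.F).inv ≫ (H.unit ⊗ₘ 𝟙 𝔽.F) ≫ p.ω = H.counit) :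
    -- `Hom(1, F)` is a `k`-algebra under `⋆₁`
    (∀ f f' g : 𝟙_ C ⟶ 𝔽.F,
        (λ_ (𝟙_ C)).inv ≫ ((f + f') ⊗ₘ g) ≫ H.mul =
          (λ_ (𝟙_ C)).inv ≫ (f ⊗ₘ g) ≫ H.mul + (λ_ (𝟙_ C)).inv ≫ (f' ⊗ₘ g) ≫ H.mul) ∧
    (∀ f g g' : 𝟙_ C ⟶ 𝔽.F,
        (λ_ (𝟙_ C)).inv ≫ (f ⊗ₘ (g + g')) ≫ H.mul =
          (λ_ (𝟙_ C)).inv ≫ (f ⊗ₘ g) ≫ H.mul + (λ_ (𝟙_ C)).inv ≫ (f ⊗ₘ g') ≫ H.mul) ∧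
    (∀ (c : k) (f g : 𝟙_ C ⟶ 𝔽.F),
        (λ_ (𝟙_ C)).inv ≫ ((c • f) ⊗ₘ g) ≫ H.mul =
          c • ((λ_ (𝟙_ C)).inv ≫ (f ⊗ₘ g) ≫ H.mul)) ∧
    (∀ (c : k) (f g : 𝟙_ C ⟶ 𝔽.F),
        (λ_ (𝟙_ C)).inv ≫ (f ⊗ₘ (c • g)) ≫ H.mul =
          c • ((λ_ (𝟙_ C)).inv ≫ (f ⊗ₘ g) ≫ H.mul)) ∧
    (∀ f g h : 𝟙_ C ⟶ 𝔽.F,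
        (λ_ (𝟙_ C)).inv ≫ (((λ_ (𝟙_ C)).inv ≫ (f ⊗ₘ g) ≫ H.mul) ⊗ₘ h) ≫ H.mul =
          (λ_ (𝟙_ C)).inv ≫ (f ⊗ₘ ((λ_ (𝟙_ C)).inv ≫ (g ⊗ₘ h) ≫ H.mul)) ≫ H.mul) ∧
    (∀ f : 𝟙_ C ⟶ 𝔽.F, (λ_ (𝟙_ C)).inv ≫ (H.unit ⊗ₘ f) ≫ H.mul = f) ∧
    (∀ f : 𝟙_ C ⟶ 𝔽.F, (λ_ (𝟙_ C)).inv ≫ (f ⊗ₘ H.unit) ≫ H.mul = f) ∧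
    -- `Hom(F, 1)` is a `k`-algebra under `⋆₂`
    (∀ a a' b : 𝔽.F ⟶ 𝟙_ C,
        H.comul ≫ ((a + a') ⊗ₘ b) ≫ (λ_ (𝟙_ C)).hom =
          H.comul ≫ (a ⊗ₘ b) ≫ (λ_ (𝟙_ C)).hom + H.comul ≫ (a' ⊗ₘ b) ≫ (λ_ (𝟙_ C)).hom) ∧
    (∀ a b b' : 𝔽.F ⟶ 𝟙_ C,
        H.comul ≫ (a ⊗ₘ (b + b')) ≫ (λ_ (𝟙_ C)).hom =
          H.comul ≫ (a ⊗ₘ b) ≫ (λ_ (𝟙_ C)).hom + H.comul ≫ (a ⊗ₘ b') ≫ (λ_ (𝟙_ C)).hom) ∧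
    (∀ (c : k) (a b : 𝔽.F ⟶ 𝟙_ C),
        H.comul ≫ ((c • a) ⊗ₘ b) ≫ (λ_ (𝟙_ C)).hom =
          c • (H.comul ≫ (a ⊗ₘ b) ≫ (λ_ (𝟙_ C)).hom)) ∧
    (∀ (c : k) (a b : 𝔽.F ⟶ 𝟙_ C),
        H.comul ≫ (a ⊗ₘ (c • b)) ≫ (λ_ (𝟙_ C)).hom =
          c • (H.comul ≫ (a ⊗ₘ b) ≫ (λ_ (𝟙_ C)).hom)) ∧
    (∀ a b c : 𝔽.F ⟶ 𝟙_ C,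
        H.comul ≫ ((H.comul ≫ (a ⊗ₘ b) ≫ (λ_ (𝟙_ C)).hom) ⊗ₘ c) ≫ (λ_ (𝟙_ C)).hom =
          H.comul ≫ (a ⊗ₘ (H.comul ≫ (b ⊗ₘ c) ≫ (λ_ (𝟙_ C)).hom)) ≫ (λ_ (𝟙_ C)).hom) ∧
    (∀ a : 𝔽.F ⟶ 𝟙_ C, H.comul ≫ (H.counit ⊗ₘ a) ≫ (λ_ (𝟙_ C)).hom = a) ∧
    (∀ a : 𝔽.F ⟶ 𝟙_ C, H.comul ≫ (a ⊗ₘ H.counit) ≫ (λ_ (𝟙_ C)).hom = a) ∧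
    -- `Φ_C` is a homomorphism of `k`-algebras
    (∀ f g : 𝟙_ C ⟶ 𝔽.F,
        p.Phi ((λ_ (𝟙_ C)).inv ≫ (f ⊗ₘ g) ≫ H.mul) =
          H.comul ≫ (p.Phi f ⊗ₘ p.Phi g) ≫ (λ_ (𝟙_ C)).hom) ∧
    (∀ (c : k) (f : 𝟙_ C ⟶ 𝔽.F), p.Phi (c • f) = c • p.Phi f) ∧
    (∀ f g : 𝟙_ C ⟶ 𝔽.F, p.Phi (f + g) = p.Phi f + p.Phi g) ∧
    p.Phi H.unit = H.counit :=
  Phi_is_algebra_homomorphism_general k C 𝔽 H p hωmul hωunit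

end NonSSMTC
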